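/- arXiv:2502.19072 — 7 statements merged into one kernel-verified Lean document; each statement's English description precedes it below -/
import Mathlib

section
/- Let D be a Dedekind domain and (β) a nonzero principal ideal of D, and let 𝒟 ⊆ D be a complete set of coset representatives for D/βD containing 0 for the zero coset. Then for every a ∈ D there exists a unique sequence of digits (d₀, d₁, d₂, …) with each dᵢ ∈ 𝒟 such that a ≡ Σ_{i=0}^{k-1} dᵢ β^i (mod β^k D) for all k ≥ 1. -/
/-- Digit expansions to base `β` in a Dedekind domain: if `𝒟` is a complete set of coset
representatives of `D/βD` containing `0` (representing the zero coset), then every `a ∈ D`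
has a unique digit expansion `a ≡ Σ_{i<k} dᵢ β^i (mod β^k D)` for all `k ≥ 1`, with all
digits `dᵢ ∈ 𝒟`. -/
theorem dedekind_digit_expansion {D : Type*} [CommRing D] [IsDomain D] [IsDedekindDomain D]
    (β : D) (hβ : β ≠ 0) (hproper : Ideal.span {β} ≠ ⊤)
    (𝒟 : Set D) (h𝒟 : ∀ x : D, ∃! d, d ∈ 𝒟 ∧ x - d ∈ Ideal.span {β})
    (h0 : (0 : D) ∈ 𝒟) (a : D) :
    ∃! d : ℕ → D, (∀ i, d i ∈ 𝒟) ∧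
      ∀ k : ℕ, 1 ≤ k →
        a - (∑ i ∈ Finset.range k, d i * β ^ i) ∈ Ideal.span {β} ^ k := by
  classical
  choose dig hdigD hdigmem using fun x => (h𝒟 x).exists
  choose q hq using fun x => (Ideal.mem_span_singleton.mp (hdigmem x))
  -- hq : ∀ x, x - dig x = β * q x
  set f : ℕ → D := fun n => Nat.rec a (fun _ ih => q ih) n with hf
  have hfs : ∀ n, f (n + 1) = q (f n) := fun n => rfl
  have key : ∀ k, a - ∑ i ∈ Finset.range k, dig (f i) * β ^ i = β ^ k * f k := by
    intro k
    induction k with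
    | zero => show a - _ = _; rw [Finset.range_zero, Finset.sum_empty, sub_zero, pow_zero, one_mul]; rfl
    | succ k ih =>
      rw [Finset.sum_range_succ]
      have h2 : a - (∑ i ∈ Finset.range k, dig (f i) * β ^ i + dig (f k) * β ^ k)
          = (a - ∑ i ∈ Finset.range k, dig (f i) * β ^ i) - dig (f k) * β ^ k := by ring
      rw [h2, ih]
      calc β ^ k * f k - dig (f k) * β ^ k = β ^ k * (f k - dig (f k)) := by ring
        _ = β ^ k * (β * q (f k)) := by rw [hq (f k)]
        _ = β ^ (k + 1) * f (k + 1) := by rw [hfs]; ring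
  refine ⟨fun i => dig (f i), ⟨fun i => hdigD (f i), fun k _ => ?_⟩, ?_⟩
  · rw [Ideal.span_singleton_pow, Ideal.mem_span_singleton]
    exact ⟨f k, key k⟩
  · rintro e ⟨heD, he⟩
    funext i
    induction i using Nat.strong_induction_on with
    | _ i ih =>
      have h1 := he (i + 1) (by omega)
      have h2 : a - ∑ j ∈ Finset.range (i + 1), dig (f j) * β ^ j
          ∈ Ideal.span {β} ^ (i + 1) := by
        rw [Ideal.span_singleton_pow, Ideal.mem_span_singleton]
        exact ⟨f (i + 1), key (i + 1)⟩
      have hmem : (e i - dig (f i)) * β ^ i ∈ Ideal.span {β} ^ (i + 1) := by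
        have m := Ideal.sub_mem _ h2 h1
        have heq : (a - ∑ j ∈ Finset.range (i + 1), dig (f j) * β ^ j)
            - (a - ∑ j ∈ Finset.range (i + 1), e j * β ^ j)
            = (e i - dig (f i)) * β ^ i := by
          have hz : ∑ j ∈ Finset.range i, dig (f j) * β ^ j
              = ∑ j ∈ Finset.range i, e j * β ^ j :=
            Finset.sum_congr rfl fun j hj => by rw [ih j (Finset.mem_range.mp hj)]
          rw [Finset.sum_range_succ, Finset.sum_range_succ (f := fun j => e j * β ^ j), hz]
          ring
        rwa [heq] at m
      rw [Ideal.span_singleton_pow, Ideal.mem_span_singleton, pow_succ'] at hmem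
      have hdvd : β ∣ e i - dig (f i) :=
        (mul_dvd_mul_iff_right (pow_ne_zero i hβ)).mp hmem
      exact (h𝒟 (e i)).unique ⟨heD i, by simp⟩
        ⟨hdigD (f i), Ideal.mem_span_singleton.mpr hdvd⟩
end

section
/- Let K be a field and U a nonempty subset of K[[t]]. For a fixed sequence f = (fᵢ(t))_{i≥0} of elements of U, define αₖ(U, f) = Σ_{j=0}^{k-1} v_t(fₖ(t) − fⱼ(t)) where v_t is the t-adic valuation, and suppose f is a t-ordering, i.e., for each k ≥ 1, αₖ(U, f) = min over g ∈ U of Σ_{j=0}^{k-1} v_t(g − fⱼ). Then the sequence (αₖ(U, f))_{k≥0} is nondecreasing: α_{k+1}(U, f) ≥ αₖ(U, f) for all k ≥ 0. -/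
theorem monotone_iInf_sum_range {α M : Type*} [AddCommMonoid M] [CompleteLattice M]
    [CanonicallyOrderedAdd M] (U : Set α) (c : α → ℕ → M) :
    Monotone fun k => ⨅ g ∈ U, ∑ j ∈ Finset.range k, c g j :=
  fun _ _ hkl => iInf₂_mono fun _ _ =>
    Finset.sum_le_sum_of_subset (Finset.range_subset_range.2 hkl)

open PowerSeries in
theorem t_ordering_exponents_monotone_general {K : Type*} [Field K]
    (U : Set (PowerSeries K))
    (f : ℕ → PowerSeries K)
    (hord : ∀ k : ℕ, 1 ≤ k →
      (∑ j ∈ Finset.range k, (f k - f j).order) =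
        ⨅ g ∈ U, ∑ j ∈ Finset.range k, (g - f j).order) :
    Monotone fun k => ∑ j ∈ Finset.range k, (f k - f j).order := by
  refine monotone_nat_of_le_succ fun k => ?_
  rcases Nat.eq_zero_or_pos k with rfl | hk
  · exact zero_le
  · rw [hord k hk, hord (k + 1) (by omega)]
    exact monotone_iInf_sum_range U (fun g j => (g - f j).order) k.le_succ

open PowerSeries in
/-- If `f` is a (plain) `t`-ordering of a nonempty subset `U ⊆ K[[t]]`, then the associated
`t`-exponent sequence `αₖ = Σ_{j<k} v_t(fₖ - fⱼ)` is nondecreasing. -/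
theorem t_ordering_exponents_monotone {K : Type*} [Field K]
    (U : Set (PowerSeries K)) (hU : U.Nonempty)
    (f : ℕ → PowerSeries K) (hf : ∀ i, f i ∈ U)
    (hord : ∀ k : ℕ, 1 ≤ k →
      (∑ j ∈ Finset.range k, (f k - f j).order) =
        ⨅ g ∈ U, ∑ j ∈ Finset.range k, (g - f j).order) :
    Monotone fun k => ∑ j ∈ Finset.range k, (f k - f j).order :=
  t_ordering_exponents_monotone_general U f hord
end

section
/- Let K be a field and U a nonempty subset of K[[t]], h ∈ ℕ ∪ {∞}, r ∈ ℕ. Let f = (fᵢ)_{i≥0} be an r-removed t-ordering of order h of U, with associated invariants αₖ^{h,{r}}(U, f) = min over (k−r)-element subsets A of {0,…,k−1} of Σ_{j∈A} min(h, v_t(fₖ − fⱼ)). Then the sequence (αₖ^{h,{r}}(U, f))_{k≥0} is nondecreasing. -/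
/-!
For `k ≤ r` the empty set is admissible, so `αₖ = 0`. For `k > r`, the ordering property says
that `αₖ` is the minimum over all `g ∈ U`; taking `g = fₖ₊₁` bounds `αₖ` by the minimum over
`(k - r)`-subsets of `{0, …, k-1}` for `fₖ₊₁`. Every admissible `(k + 1 - r)`-subset of
`{0, …, k}` for `αₖ₊₁` contains such a subset, and dropping nonnegative summands only lowers
the sum.
-/

open Finset

theorem Finset.exists_subset_range_card_eq_of_subset_range_succ {k n : ℕ} {B : Finset ℕ}
    (hB : B ⊆ range (k + 1)) (hcard : #B = n + 1) : ∃ A ⊆ B, A ⊆ range k ∧ #A = n := by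
  have herase : B.erase k ⊆ range k := fun j hj => by
    have hjk := ne_of_mem_erase hj
    have hj := mem_range.mp (hB (mem_of_mem_erase hj))
    exact mem_range.mpr (by omega)
  obtain ⟨A, hA, hAcard⟩ :=
    exists_subset_card_eq (s := B.erase k) (n := n) (by grind [pred_card_le_card_erase])
  exact ⟨A, hA.trans (erase_subset _ _), hA.trans herase, hAcard⟩

section SubsetSums

variable {M : Type*} [AddCommMonoid M] [CompleteLattice M] [CanonicallyOrderedAdd M]

theorem iInf_sum_subset_range_card_zero (k : ℕ) (c : ℕ → M) :
    ⨅ A ∈ {A : Finset ℕ | A ⊆ range k ∧ #A = 0}, ∑ j ∈ A, c j = 0 :=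
  le_antisymm ((iInf₂_le (∅ : Finset ℕ) ⟨empty_subset _, card_empty⟩).trans_eq sum_empty) zero_le

theorem iInf_sum_subset_range_le_iInf_sum_subset_range_succ [IsOrderedAddMonoid M]
    (k n : ℕ) (c : ℕ → M) :
    ⨅ A ∈ {A : Finset ℕ | A ⊆ range k ∧ #A = n}, ∑ j ∈ A, c j ≤
      ⨅ B ∈ {B : Finset ℕ | B ⊆ range (k + 1) ∧ #B = n + 1}, ∑ j ∈ B, c j := by
  refine le_iInf₂ fun B ⟨hB, hcard⟩ => ?_
  obtain ⟨A, hAB, hA, hAcard⟩ := exists_subset_range_card_eq_of_subset_range_succ hB hcard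
  exact (iInf₂_le A ⟨hA, hAcard⟩).trans (sum_le_sum_of_subset hAB)

end SubsetSums

open PowerSeries in
theorem removed_order_t_ordering_exponents_monotone_general {K : Type*} [Field K]
    (U : Set (PowerSeries K)) (h : ℕ∞) (r : ℕ)
    (f : ℕ → PowerSeries K) (hf : ∀ i, f i ∈ U)
    (hord : ∀ k : ℕ, r < k →
      (⨅ A ∈ {A : Finset ℕ | A ⊆ Finset.range k ∧ A.card = k - r},
          ∑ j ∈ A, min h ((f k - f j).order)) =
        ⨅ g ∈ U, ⨅ A ∈ {A : Finset ℕ | A ⊆ Finset.range k ∧ A.card = k - r},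
          ∑ j ∈ A, min h ((g - f j).order)) :
    Monotone fun k =>
      ⨅ A ∈ {A : Finset ℕ | A ⊆ Finset.range k ∧ A.card = k - r},
        ∑ j ∈ A, min h ((f k - f j).order) := by
  refine monotone_nat_of_le_succ fun k => ?_
  rcases le_or_gt k r with hk | hk
  · simp only [Nat.sub_eq_zero_of_le hk, iInf_sum_subset_range_card_zero]
    exact zero_le
  · rw [hord k hk, show k + 1 - r = k - r + 1 by omega]
    exact (iInf₂_le (f (k + 1)) (hf (k + 1))).trans
      (iInf_sum_subset_range_le_iInf_sum_subset_range_succ k (k - r) _)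

open PowerSeries in
/-- If `f` is an `r`-removed `t`-ordering of order `h` of a nonempty subset `U ⊆ K[[t]]`,
then the associated exponent sequence
`αₖ^{h,{r}} = min_{A ⊆ {0,…,k-1}, |A| = k-r} Σ_{j∈A} min(h, v_t(fₖ - fⱼ))`
is nondecreasing. -/
theorem removed_order_t_ordering_exponents_monotone {K : Type*} [Field K]
    (U : Set (PowerSeries K)) (hU : U.Nonempty) (h : ℕ∞) (r : ℕ)
    (f : ℕ → PowerSeries K) (hf : ∀ i, f i ∈ U)
    (hord : ∀ k : ℕ, r < k →
      (⨅ A ∈ {A : Finset ℕ | A ⊆ Finset.range k ∧ A.card = k - r},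
          ∑ j ∈ A, min h ((f k - f j).order)) =
        ⨅ g ∈ U, ⨅ A ∈ {A : Finset ℕ | A ⊆ Finset.range k ∧ A.card = k - r},
          ∑ j ∈ A, min h ((g - f j).order)) :
    Monotone fun k =>
      ⨅ A ∈ {A : Finset ℕ | A ⊆ Finset.range k ∧ A.card = k - r},
        ∑ j ∈ A, min h ((f k - f j).order) :=
  removed_order_t_ordering_exponents_monotone_general U h r f hf hord
end

section
/- Let D be a Dedekind domain. For polynomials f₁, f₂ ∈ D[X], the content ideal is multiplicative: ct(f₁ f₂) = ct(f₁) · ct(f₂), where ct(f) is the ideal of D generated by the coefficients of f. -/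
/-!
Both sides of the equation are compatible with localization, and two ideals that agree after
localizing at every maximal ideal are equal. A Dedekind domain localized at a maximal ideal is a
local Dedekind domain, hence a principal ideal domain. There the content ideal of a polynomial is
generated by its gcd-content, which is multiplicative up to units by Gauss's lemma.
-/

/-- The content ideal of a polynomial: the ideal generated by its coefficients. -/
noncomputable def contentIdeal {D : Type*} [CommRing D] (f : Polynomial D) : Ideal D :=
  Ideal.span (Set.range f.coeff)

theorem contentIdeal_eq_polynomial_contentIdeal {R : Type*} [CommRing R] (f : Polynomial R) :
    contentIdeal f = f.contentIdeal := by
  refine le_antisymm (Ideal.span_le.mpr ?_) (Ideal.span_le.mpr ?_)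
  · rintro _ ⟨n, rfl⟩
    exact f.coeff_mem_contentIdeal n
  · intro c hc
    obtain ⟨n, -, rfl⟩ := Polynomial.mem_coeffs_iff.mp hc
    exact Ideal.subset_span ⟨n, rfl⟩

theorem IsDedekindDomain.isPrincipalIdealRing_of_isLocalRing (R : Type*) [CommRing R]
    [IsDedekindDomain R] [IsLocalRing R] : IsPrincipalIdealRing R :=
  IsPrincipalIdealRing.of_finite_maximals <|
    (Set.finite_singleton (IsLocalRing.maximalIdeal R)).subset fun _ ↦ IsLocalRing.eq_maximalIdeal

namespace Polynomial

theorem contentIdeal_mul_of_isBezout {R : Type*} [CommRing R] [IsDomain R] [IsBezout R]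
    [NormalizedGCDMonoid R] (p q : R[X]) :
    (p * q).contentIdeal = p.contentIdeal * q.contentIdeal := by
  have h_span (r : R[X]) : r.contentIdeal = Ideal.span {r.content} :=
    (IsBezout.isPrincipal_of_FG _ r.contentIdeal_FG).contentIdeal_eq_span_content_of_isPrincipal
  rw [h_span, h_span, h_span, Ideal.span_singleton_mul_span_singleton,
    Ideal.span_singleton_eq_span_singleton]
  exact associated_content_mul p q

theorem contentIdeal_mul_of_isPrincipalIdealRing {R : Type*} [CommRing R] [IsDomain R]
    [IsPrincipalIdealRing R] (p q : R[X]) :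
    (p * q).contentIdeal = p.contentIdeal * q.contentIdeal := by
  let := UniqueFactorizationMonoid.strongNormalizationMonoid (α := R)
  let := UniqueFactorizationMonoid.toNormalizedGCDMonoid R
  exact contentIdeal_mul_of_isBezout p q

end Polynomial

theorem contentIdeal_mul_general {D : Type*} [CommRing D] [IsDedekindDomain D]
    (f₁ f₂ : Polynomial D) :
    contentIdeal (f₁ * f₂) = contentIdeal f₁ * contentIdeal f₂ := by
  simp only [contentIdeal_eq_polynomial_contentIdeal]
  refine Ideal.eq_of_localization_maximal fun P _ ↦ ?_
  have := IsDedekindDomain.isPrincipalIdealRing_of_isLocalRing (Localization.AtPrime P)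
  simp only [Ideal.map_mul, ← Polynomial.contentIdeal_map_eq_map_contentIdeal, Polynomial.map_mul]
  exact Polynomial.contentIdeal_mul_of_isPrincipalIdealRing _ _

/-- Over a Dedekind domain, the content ideal is multiplicative:
`ct(f₁ f₂) = ct(f₁) · ct(f₂)` (Gauss/Dedekind–Mertens for Dedekind domains). -/
theorem contentIdeal_mul {D : Type*} [CommRing D] [IsDomain D] [IsDedekindDomain D]
    (f₁ f₂ : Polynomial D) :
    contentIdeal (f₁ * f₂) = contentIdeal f₁ * contentIdeal f₂ :=
  contentIdeal_mul_general f₁ f₂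
end

section
/- Let D be a Dedekind domain and let D(X) be the localization of D[X] at the set of polynomials with unit content ideal. For every nonzero ideal 𝔞 = (α₀, α₁)D of D generated by two nonzero elements, the extended ideal 𝔞·D(X) is the principal ideal generated by α₀ + α₁X. -/
/-!
Since `𝔞 = (α₀, α₁)` is invertible, there are `β₀, β₁ ∈ 𝔞⁻¹` with `β₀ α₀ + β₁ α₁ = 1`. Then
`s = (β₀ + β₁ X)(α₀ + α₁ X)` lies in `D[X]` and has unit content, since the sum of its constant and
leading coefficients is `1`; so `s` is a unit of `D(X)`. As `αⱼ s = (α₀ + α₁ X)(β₀ αⱼ + β₁ αⱼ X)`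
with the second factor in `D[X]`, each `αⱼ` is a multiple of `α₀ + α₁ X` in `D(X)`.
-/

open scoped Polynomial
open Polynomial (C X)

/-- Morally `bᵢⱼ = βⱼ αᵢ` with `β₀ α₀ + β₁ α₁ = 1` and `βⱼ ∈ 𝔞⁻¹`; integrally, `α₀ βⱼ = cⱼ`
where `𝔞 J = (α₀)` and `α₀ c₀ + α₁ c₁ = α₀` with `cⱼ ∈ J`. -/
theorem exists_trace_eq_one_of_span_pair {D : Type*} [CommRing D] [IsDedekindDomain D]
    {α₀ : D} (α₁ : D) (hα₀ : α₀ ≠ 0) :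
    ∃ b₀₀ b₀₁ b₁₀ b₁₁ : D, b₀₀ + b₁₁ = 1 ∧ α₁ * b₀₀ = α₀ * b₁₀ ∧ α₁ * b₀₁ = α₀ * b₁₁ := by
  set 𝔞 := Ideal.span {α₀, α₁}
  obtain ⟨J, hJ⟩ : 𝔞 ∣ Ideal.span {α₀} :=
    Ideal.dvd_iff_le.mpr (Ideal.span_mono (Set.singleton_subset_iff.mpr (by simp)))
  obtain ⟨c₀, hc₀, c₁, hc₁, hc⟩ : ∃ c₀ ∈ J, ∃ c₁ ∈ J, α₀ * c₀ + α₁ * c₁ = α₀ := by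
    have h : α₀ ∈ 𝔞 * J := hJ ▸ Ideal.mem_span_singleton_self α₀
    simp only [𝔞, Ideal.span_insert, Ideal.sup_mul, Submodule.mem_sup,
      Ideal.mem_span_singleton_mul] at h
    obtain ⟨-, ⟨c₀, hc₀, rfl⟩, -, ⟨c₁, hc₁, rfl⟩, hc⟩ := h
    exact ⟨c₀, hc₀, c₁, hc₁, hc⟩
  have hdvd : ∀ a ∈ 𝔞, ∀ c ∈ J, α₀ ∣ a * c := fun a ha c hc =>
    Ideal.mem_span_singleton.mp (hJ ▸ Ideal.mul_mem_mul ha hc)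
  obtain ⟨b₀₀, hb₀₀⟩ := hdvd α₀ (Ideal.subset_span (by simp)) c₀ hc₀
  obtain ⟨b₁₀, hb₁₀⟩ := hdvd α₁ (Ideal.subset_span (by simp)) c₀ hc₀
  obtain ⟨b₀₁, hb₀₁⟩ := hdvd α₀ (Ideal.subset_span (by simp)) c₁ hc₁
  obtain ⟨b₁₁, hb₁₁⟩ := hdvd α₁ (Ideal.subset_span (by simp)) c₁ hc₁
  refine ⟨b₀₀, b₀₁, b₁₀, b₁₁, ?_, ?_, ?_⟩ <;> apply mul_left_cancel₀ hα₀
  · linear_combination hc - hb₀₀ - hb₁₁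
  · linear_combination α₀ * hb₁₀ - α₁ * hb₀₀
  · linear_combination α₀ * hb₁₁ - α₁ * hb₀₁

theorem exists_contentIdeal_eq_top_dvd {R : Type*} [CommRing R] {α₀ α₁ b₀₀ b₀₁ b₁₀ b₁₁ : R}
    (hb : b₀₀ + b₁₁ = 1) (h₀ : α₁ * b₀₀ = α₀ * b₁₀) (h₁ : α₁ * b₀₁ = α₀ * b₁₁) :
    ∃ s : R[X], contentIdeal s = ⊤ ∧
      C α₀ + C α₁ * X ∣ C α₀ * s ∧ C α₀ + C α₁ * X ∣ C α₁ * s := by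
  have h₀' : C α₁ * C b₀₀ = C α₀ * C b₁₀ := by simp only [← map_mul, h₀]
  have h₁' : C α₁ * C b₀₁ = C α₀ * C b₁₁ := by simp only [← map_mul, h₁]
  refine ⟨C b₀₀ + (C b₁₀ + C b₀₁) * X + C b₁₁ * X ^ 2, ?_,
    ⟨C b₀₀ + C b₀₁ * X, ?_⟩, ⟨C b₁₀ + C b₁₁ * X, ?_⟩⟩
  · rw [Ideal.eq_top_iff_one, contentIdeal, ← hb]
    refine add_mem (Ideal.subset_span ⟨0, ?_⟩) (Ideal.subset_span ⟨2, ?_⟩) <;>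
      simp [Polynomial.coeff_C, Polynomial.coeff_X]
  · linear_combination -X * h₀' - X ^ 2 * h₁'
  · linear_combination h₀' + X * h₁'

open Polynomial in
theorem extended_ideal_principal_general {D : Type*} [CommRing D] [IsDedekindDomain D]
    (α₀ α₁ : D) (hα₀ : α₀ ≠ 0) :
    Ideal.map
        ((algebraMap (Polynomial D)
              (Localization (Submonoid.closure {g : Polynomial D | _root_.contentIdeal g = ⊤}))).comp
          (Polynomial.C))
        (Ideal.span {α₀, α₁}) =
      Ideal.span
        {algebraMap (Polynomial D)
            (Localization (Submonoid.closure {g : Polynomial D | _root_.contentIdeal g = ⊤}))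
            (Polynomial.C α₀ + Polynomial.C α₁ * Polynomial.X)} := by
  set S := Submonoid.closure {g : D[X] | _root_.contentIdeal g = ⊤}
  set ψ := algebraMap D[X] (Localization S)
  obtain ⟨b₀₀, b₀₁, b₁₀, b₁₁, hb, h₀, h₁⟩ := exists_trace_eq_one_of_span_pair α₁ hα₀
  obtain ⟨s, hs, hdvd₀, hdvd₁⟩ := exists_contentIdeal_eq_top_dvd hb h₀ h₁
  have hψs : IsUnit (ψ s) := IsLocalization.map_units _ (⟨s, Submonoid.subset_closure hs⟩ : S)
  have hmem : ∀ a, C α₀ + C α₁ * X ∣ C a * s → ψ (C a) ∈ Ideal.span {ψ (C α₀ + C α₁ * X)} :=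
    fun a h => Ideal.mem_span_singleton.mpr (hψs.dvd_mul_right.mp (map_mul ψ _ s ▸ map_dvd ψ h))
  apply le_antisymm
  · rw [Ideal.map_span, Ideal.span_le]
    rintro - ⟨a, rfl | rfl, rfl⟩
    exacts [hmem _ hdvd₀, hmem _ hdvd₁]
  · rw [Ideal.span_le, Set.singleton_subset_iff, SetLike.mem_coe, map_add, map_mul]
    exact add_mem (Ideal.mem_map_of_mem _ (Ideal.subset_span (by simp)))
      (Ideal.mul_mem_right _ _ (Ideal.mem_map_of_mem _ (Ideal.subset_span (by simp))))

open Polynomial in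
/-- In `D(X)`, the localization of `D[X]` at the polynomials of unit content, the extension
of a nonzero ideal `𝔞 = (α₀, α₁)` of `D` (with `α₀, α₁ ≠ 0`) is the principal ideal
generated by `α₀ + α₁ X`. -/
theorem extended_ideal_principal {D : Type*} [CommRing D] [IsDomain D] [IsDedekindDomain D]
    (α₀ α₁ : D) (hα₀ : α₀ ≠ 0) (hα₁ : α₁ ≠ 0) :
    Ideal.map
        ((algebraMap (Polynomial D)
              (Localization (Submonoid.closure {g : Polynomial D | _root_.contentIdeal g = ⊤}))).comp
          (Polynomial.C))
        (Ideal.span {α₀, α₁}) =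
      Ideal.span
        {algebraMap (Polynomial D)
            (Localization (Submonoid.closure {g : Polynomial D | _root_.contentIdeal g = ⊤}))
            (Polynomial.C α₀ + Polynomial.C α₁ * Polynomial.X)} :=
  extended_ideal_principal_general α₀ α₁ hα₀
end

section
/- Let D be a Dedekind domain and D(X) the localization of D[X] at polynomials with unit content. For every nonzero proper ideal 𝔟 of D, distinct powers X^j and X^k (j ≠ k) lie in distinct residue classes modulo 𝔟·D(X); in particular D(X)/𝔟·D(X) is infinite. -/
open Polynomial (X C coeff_X_pow)
open scoped Polynomial

section

variable {D : Type*} [CommRing D]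

theorem contentIdeal_X_pow_sub_X_pow {j k : ℕ} (h : j ≠ k) :
    contentIdeal ((X : D[X]) ^ j - X ^ k) = ⊤ := by
  rw [contentIdeal, Ideal.eq_top_iff_one]
  exact Ideal.subset_span ⟨j, by simp [coeff_X_pow, h]⟩

theorem contentIdeal_le_iff_mem_map_C {g : D[X]} {I : Ideal D} :
    contentIdeal g ≤ I ↔ g ∈ I.map C := by
  rw [contentIdeal, Ideal.span_le, Ideal.mem_map_C_iff, Set.range_subset_iff]
  rfl

theorem closure_contentIdeal_eq_top_le_primeCompl (P : Ideal D) [P.IsPrime] :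
    Submonoid.closure {g : D[X] | contentIdeal g = ⊤} ≤ (P.map C).primeCompl := by
  refine Submonoid.closure_le.mpr fun g hg hgP => ?_
  have hle : contentIdeal g ≤ P := contentIdeal_le_iff_mem_map_C.mpr hgP
  exact Ideal.IsPrime.ne_top ‹P.IsPrime› (top_le_iff.mp (hg ▸ hle))

variable {L : Type*} [CommRing L] [Algebra D[X] L]
  [IsLocalization (Submonoid.closure {g : D[X] | contentIdeal g = ⊤}) L]

theorem map_algebraMap_comp_C_ne_top {𝔟 : Ideal D} (h𝔟 : 𝔟 ≠ ⊤) :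
    𝔟.map ((algebraMap D[X] L).comp C) ≠ ⊤ := by
  obtain ⟨𝔪, h𝔪, h𝔟𝔪⟩ := Ideal.exists_le_maximal 𝔟 h𝔟
  have hprime : ((𝔪.map C).map (algebraMap D[X] L)).IsPrime :=
    IsLocalization.isPrime_of_isPrime_disjoint _ L _ inferInstance
      (Set.disjoint_left.mpr fun _ hg => closure_contentIdeal_eq_top_le_primeCompl 𝔪 hg)
  have hle : 𝔟.map ((algebraMap D[X] L).comp C) ≤ (𝔪.map C).map (algebraMap D[X] L) := by
    rw [Ideal.map_map]
    exact Ideal.map_mono h𝔟𝔪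
  exact ne_top_of_le_ne_top hprime.ne_top hle

theorem isUnit_algebraMap_X_pow_sub_X_pow {j k : ℕ} (h : j ≠ k) :
    IsUnit (algebraMap D[X] L (X ^ j) - algebraMap D[X] L (X ^ k)) := by
  rw [← map_sub]
  exact IsLocalization.map_units L
    (⟨_, Submonoid.subset_closure (contentIdeal_X_pow_sub_X_pow h)⟩ :
      Submonoid.closure {g : D[X] | contentIdeal g = ⊤})

theorem algebraMap_X_pow_sub_X_pow_notMem_map {𝔟 : Ideal D} (h𝔟 : 𝔟 ≠ ⊤) {j k : ℕ} (h : j ≠ k) :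
    algebraMap D[X] L (X ^ j) - algebraMap D[X] L (X ^ k) ∉ 𝔟.map ((algebraMap D[X] L).comp C) :=
  fun hmem => map_algebraMap_comp_C_ne_top h𝔟
    (Ideal.eq_top_of_isUnit_mem _ hmem (isUnit_algebraMap_X_pow_sub_X_pow h))

theorem infinite_quotient_map_algebraMap_comp_C {𝔟 : Ideal D} (h𝔟 : 𝔟 ≠ ⊤) :
    Infinite (L ⧸ 𝔟.map ((algebraMap D[X] L).comp C)) :=
  Infinite.of_injective (fun n : ℕ => Ideal.Quotient.mk _ (algebraMap D[X] L (X ^ n)))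
    fun _ _ hjk => by_contra fun h => algebraMap_X_pow_sub_X_pow_notMem_map h𝔟 h
      (Ideal.Quotient.eq.mp hjk)

end

open Polynomial in
theorem powers_X_distinct_mod_extension_general {D : Type*} [CommRing D]
    (𝔟 : Ideal D) (hproper : 𝔟 ≠ ⊤) :
    (∀ j k : ℕ, j ≠ k →
        algebraMap (Polynomial D)
              (Localization (Submonoid.closure {g : Polynomial D | _root_.contentIdeal g = ⊤}))
              (Polynomial.X ^ j) -
            algebraMap (Polynomial D)
              (Localization (Submonoid.closure {g : Polynomial D | _root_.contentIdeal g = ⊤}))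
              (Polynomial.X ^ k) ∉
          Ideal.map
            ((algebraMap (Polynomial D)
                  (Localization
                    (Submonoid.closure {g : Polynomial D | _root_.contentIdeal g = ⊤}))).comp
              (Polynomial.C))
            𝔟) ∧
      Infinite
        ((Localization (Submonoid.closure {g : Polynomial D | _root_.contentIdeal g = ⊤})) ⧸
          Ideal.map
            ((algebraMap (Polynomial D)
                  (Localization
                    (Submonoid.closure {g : Polynomial D | _root_.contentIdeal g = ⊤}))).comp
              (Polynomial.C))
            𝔟) :=
  ⟨fun _ _ => algebraMap_X_pow_sub_X_pow_notMem_map hproper,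
    infinite_quotient_map_algebraMap_comp_C hproper⟩

open Polynomial in
/-- In `D(X)`, the localization of `D[X]` at polynomials with unit content, for every
nonzero proper ideal `𝔟` of `D` the powers `X^j` (`j ≥ 0`) lie in pairwise distinct
residue classes modulo the extended ideal `𝔟·D(X)`; in particular `D(X)/𝔟·D(X)` is
infinite. -/
theorem powers_X_distinct_mod_extension {D : Type*} [CommRing D] [IsDomain D]
    [IsDedekindDomain D] (𝔟 : Ideal D) (hne : 𝔟 ≠ ⊥) (hproper : 𝔟 ≠ ⊤) :
    (∀ j k : ℕ, j ≠ k →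
        algebraMap (Polynomial D)
              (Localization (Submonoid.closure {g : Polynomial D | _root_.contentIdeal g = ⊤}))
              (Polynomial.X ^ j) -
            algebraMap (Polynomial D)
              (Localization (Submonoid.closure {g : Polynomial D | _root_.contentIdeal g = ⊤}))
              (Polynomial.X ^ k) ∉
          Ideal.map
            ((algebraMap (Polynomial D)
                  (Localization
                    (Submonoid.closure {g : Polynomial D | _root_.contentIdeal g = ⊤}))).comp
              (Polynomial.C))
            𝔟) ∧
      Infinite
        ((Localization (Submonoid.closure {g : Polynomial D | _root_.contentIdeal g = ⊤})) ⧸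
          Ideal.map
            ((algebraMap (Polynomial D)
                  (Localization
                    (Submonoid.closure {g : Polynomial D | _root_.contentIdeal g = ⊤}))).comp
              (Polynomial.C))
            𝔟) :=
  powers_X_distinct_mod_extension_general 𝔟 hproper
end

section
/- Let K be a field, U a nonempty subset of K[[t]], and f = (fᵢ) a t-ordering of U with invariants αₖ(U, f) = Σ_{j<k} v_t(fₖ − fⱼ). Then for every polynomial p(x) ∈ K[[t]][x] of degree at most k in x with at least one coefficient of t-adic valuation 0 (i.e., p is t-primitive), min over f ∈ U of v_t(p(f)) ≤ αₖ(U, f), and this maximum over t-primitive p of degree ≤ k is attained by qₖ(x) = Π_{j=0}^{k-1}(x − fⱼ), so αₖ(U, f) = max over t-primitive p of deg ≤ k of min over f ∈ U of v_t(p(f)). -/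
/-!
Fix `β ≥ α_i` for all `i < k` and let `deg p < k` with `v(p(f_i)) > β` for all `i < k`.
Induction on `k` shows that then `t` divides every coefficient of `p` and `v(p(g)) > β` on all
of `U`: write `p = a q + r` with `q = ∏_{j<k-1} (X - f_j)` and `deg r < k - 1`; as `q`
vanishes at the earlier `f_i`, the claim holds for `r`, so
`v(a) + α_{k-1} = v(a q(f_{k-1})) > β ≥ α_{k-1}` forces `t ∣ a`, and `v(q(g)) ≥ α_{k-1}` on `U`
by the minimality defining a `t`-ordering. Taking `β = α_k` rules out a `t`-primitive `p`
beating `α_k`, and `q_k` attains `α_k` because `v(q_k(g)) = Σ_{j<k} v(g - f_j)`.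
-/

open scoped PowerSeries
open Polynomial Finset Lagrange

lemma Polynomial.Monic.exists_eq_C_mul_add_of_degree_le {R : Type*} [CommRing R] [Nontrivial R]
    {p q : R[X]} (hq : q.Monic) (hp : p.degree ≤ q.degree) :
    ∃ a r, p = C a * q + r ∧ r.degree < q.degree := by
  refine ⟨(p /ₘ q).coeff 0, p %ₘ q, ?_, degree_modByMonic_lt p hq⟩
  have hdiv : (p /ₘ q).natDegree = 0 := by
    rw [natDegree_divByMonic p hq, Nat.sub_eq_zero_of_le (natDegree_le_natDegree hp)]
  conv_lhs => rw [← modByMonic_add_div p q, eq_C_of_natDegree_eq_zero hdiv]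
  ring

section

variable {R : Type*} [CommRing R]

theorem PowerSeries.order_eval_nodal [IsDomain R] {ι : Type*} (s : Finset ι) (v : ι → R⟦X⟧)
    (g : R⟦X⟧) : (eval g (nodal s v)).order = ∑ j ∈ s, (g - v j).order := by
  rw [eval_nodal, order_prod]

def PowerSeries.IsTOrdering (U : Set R⟦X⟧) (f : ℕ → R⟦X⟧) : Prop :=
  ∀ k, f k ∈ U ∧
    ∀ g ∈ U, ∑ j ∈ range k, (f k - f j).order ≤ ∑ j ∈ range k, (g - f j).order

namespace PowerSeries.IsTOrdering

variable {U : Set R⟦X⟧} {f : ℕ → R⟦X⟧}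

theorem of_sum_eq_iInf (hf : ∀ i, f i ∈ U)
    (hord : ∀ k, 1 ≤ k → ∑ j ∈ range k, (f k - f j).order =
      ⨅ g ∈ U, ∑ j ∈ range k, (g - f j).order) :
    IsTOrdering U f := by
  refine fun k ↦ ⟨hf k, fun g hg ↦ ?_⟩
  rcases Nat.eq_zero_or_pos k with rfl | hk
  · simp
  · exact (hord k hk).trans_le (iInf₂_le g hg)

theorem sum_order_mono (hf : IsTOrdering U f) {i k : ℕ} (hik : i ≤ k) :
    ∑ j ∈ range i, (f i - f j).order ≤ ∑ j ∈ range k, (f k - f j).order :=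
  ((hf i).2 (f k) (hf k).1).trans (sum_le_sum_of_subset (range_subset_range.2 hik))

theorem iInf_order_eval_nodal [IsDomain R] (hf : IsTOrdering U f) (k : ℕ) :
    ⨅ g ∈ U, (eval g (nodal (range k) f)).order = ∑ j ∈ range k, (f k - f j).order := by
  simp_rw [order_eval_nodal]
  exact le_antisymm (iInf₂_le (f k) (hf k).1) (le_iInf₂ (hf k).2)

theorem map_constantCoeff_eq_zero_and_lt_order_eval [IsDomain R] (hf : IsTOrdering U f)
    {β : ℕ∞} (hβ : β ≠ ⊤) (k : ℕ) (p : R⟦X⟧[X]) (hp : p.degree < k)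
    (hα : ∀ i < k, ∑ j ∈ range i, (f i - f j).order ≤ β)
    (hpf : ∀ i < k, β < (p.eval (f i)).order) :
    p.map constantCoeff = 0 ∧ ∀ g ∈ U, β < (p.eval g).order := by
  induction k generalizing p with
  | zero =>
    obtain rfl : p = 0 := by simpa using hp
    simp [hβ.lt_top]
  | succ k ih =>
    obtain ⟨a, r, rfl, hr⟩ :=
      (nodal_monic (s := range k) (v := f)).exists_eq_C_mul_add_of_degree_le (p := p)
        (by rw [degree_nodal, card_range]; exact Order.le_of_lt_succ hp)
    rw [degree_nodal, card_range] at hr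
    have hrf : ∀ i < k, eval (f i) (Polynomial.C a * nodal (range k) f + r) = eval (f i) r :=
      fun i hi ↦ by simp [eval_nodal_at_node (mem_range.2 hi)]
    obtain ⟨hr0, hrU⟩ := ih r hr (fun i hi ↦ hα i (by omega))
      fun i hi ↦ hrf i hi ▸ hpf i (by omega)
    have hak : β < a.order + ∑ j ∈ range k, (f k - f j).order := by
      have hsub : a * eval (f k) (nodal (range k) f) =
          eval (f k) (Polynomial.C a * nodal (range k) f + r) + -eval (f k) r := by simp
      rw [← order_eval_nodal, ← order_mul, hsub]
      refine (lt_min (hpf k k.lt_succ_self) ?_).trans_le (min_order_le_order_add _ _)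
      rw [order_neg]
      exact hrU _ (hf k).1
    have ha0 : constantCoeff a = 0 := order_ne_zero_iff_constCoeff_eq_zero.1 fun h0 ↦ by
      rw [h0, zero_add] at hak
      exact (hak.trans_le (hα k k.lt_succ_self)).false
    refine ⟨by simp [ha0, hr0], fun g hg ↦ ?_⟩
    rw [eval_add, eval_mul, eval_C]
    refine (lt_min ?_ (hrU g hg)).trans_le (min_order_le_order_add _ _)
    rw [order_mul, order_eval_nodal]
    exact hak.trans_le (add_le_add_right ((hf k).2 g hg) _)

theorem iInf_order_eval_le [IsDomain R] (hf : IsTOrdering U f) {k : ℕ} {p : R⟦X⟧[X]}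
    (hp : p.natDegree ≤ k) (hprim : ∃ i, (p.coeff i).order = 0) :
    ⨅ g ∈ U, (p.eval g).order ≤ ∑ j ∈ range k, (f k - f j).order := by
  by_contra! hlt
  obtain ⟨i, hi⟩ := hprim
  have hmap := (hf.map_constantCoeff_eq_zero_and_lt_order_eval hlt.ne_top (k + 1) p
    (Order.lt_succ_of_le (natDegree_le_iff_degree_le.1 hp))
    (fun i hi ↦ hf.sum_order_mono (by omega))
    fun i _ ↦ hlt.trans_le (iInf₂_le _ (hf i).1)).1
  have hi0 : PowerSeries.constantCoeff (p.coeff i) = 0 := by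
    simpa using congr_arg (Polynomial.coeff · i) hmap
  exact PowerSeries.order_ne_zero_iff_constCoeff_eq_zero.2 hi0 hi

end PowerSeries.IsTOrdering

end

open PowerSeries in
theorem t_ordering_maxmin_general {K : Type*} [Field K]
    (U : Set (PowerSeries K))
    (f : ℕ → PowerSeries K) (hf : ∀ i, f i ∈ U)
    (hord : ∀ k : ℕ, 1 ≤ k →
      (∑ j ∈ Finset.range k, (f k - f j).order) =
        ⨅ g ∈ U, ∑ j ∈ Finset.range k, (g - f j).order)
    (k : ℕ) :
    (∀ p : Polynomial (PowerSeries K), p.natDegree ≤ k → (∃ i, (p.coeff i).order = 0) →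
        (⨅ g ∈ U, (Polynomial.eval g p).order) ≤
          ∑ j ∈ Finset.range k, (f k - f j).order) ∧
      (⨅ g ∈ U,
          (Polynomial.eval g
            (∏ j ∈ Finset.range k, (Polynomial.X - Polynomial.C (f j)))).order) =
        ∑ j ∈ Finset.range k, (f k - f j).order ∧
      (∑ j ∈ Finset.range k, (f k - f j).order) =
        ⨆ p ∈ {p : Polynomial (PowerSeries K) |
            p.natDegree ≤ k ∧ ∃ i, (p.coeff i).order = 0},
          ⨅ g ∈ U, (Polynomial.eval g p).order := by
  have hto := IsTOrdering.of_sum_eq_iInf hf hord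
  have hmin := hto.iInf_order_eval_nodal k
  have hq_mem :
      (nodal (range k) f).natDegree ≤ k ∧ ∃ i, ((nodal (range k) f).coeff i).order = 0 := by
    have hdeg : (nodal (range k) f).natDegree = k := by rw [natDegree_nodal, card_range]
    have hlead := (nodal_monic (s := range k) (v := f)).coeff_natDegree
    rw [hdeg] at hlead
    exact ⟨hdeg.le, k, by rw [hlead, order_one]⟩
  rw [← nodal_eq]
  refine ⟨fun p ↦ hto.iInf_order_eval_le, hmin,
    le_antisymm ?_ (iSup₂_le fun p hp ↦ hto.iInf_order_eval_le hp.1 hp.2)⟩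
  rw [← hmin]
  exact le_iSup₂ (f := fun p (_ : p ∈ {p : (PowerSeries K)[X] |
    p.natDegree ≤ k ∧ ∃ i, (p.coeff i).order = 0}) ↦ ⨅ g ∈ U, (eval g p).order) _ hq_mem

open PowerSeries in
/-- Max–min characterization of plain `t`-exponent sequences: if `f` is a `t`-ordering of a
nonempty `U ⊆ K[[t]]` with invariants `αₖ = Σ_{j<k} v_t(fₖ - fⱼ)`, then for every
`t`-primitive polynomial `p ∈ K[[t]][x]` of degree ≤ k one has
`min_{g ∈ U} v_t(p(g)) ≤ αₖ`; the value `αₖ` is attained by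
`qₖ(x) = Π_{j<k} (x - fⱼ)`, so `αₖ` equals the max over `t`-primitive `p` of degree ≤ k of
`min_{g ∈ U} v_t(p(g))`. -/
theorem t_ordering_maxmin {K : Type*} [Field K]
    (U : Set (PowerSeries K)) (hU : U.Nonempty)
    (f : ℕ → PowerSeries K) (hf : ∀ i, f i ∈ U)
    (hord : ∀ k : ℕ, 1 ≤ k →
      (∑ j ∈ Finset.range k, (f k - f j).order) =
        ⨅ g ∈ U, ∑ j ∈ Finset.range k, (g - f j).order)
    (k : ℕ) :
    (∀ p : Polynomial (PowerSeries K), p.natDegree ≤ k → (∃ i, (p.coeff i).order = 0) →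
        (⨅ g ∈ U, (Polynomial.eval g p).order) ≤
          ∑ j ∈ Finset.range k, (f k - f j).order) ∧
      (⨅ g ∈ U,
          (Polynomial.eval g
            (∏ j ∈ Finset.range k, (Polynomial.X - Polynomial.C (f j)))).order) =
        ∑ j ∈ Finset.range k, (f k - f j).order ∧
      (∑ j ∈ Finset.range k, (f k - f j).order) =
        ⨆ p ∈ {p : Polynomial (PowerSeries K) |
            p.natDegree ≤ k ∧ ∃ i, (p.coeff i).order = 0},
          ⨅ g ∈ U, (Polynomial.eval g p).order :=
  t_ordering_maxmin_general U f hf hord k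
end
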